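/- arXiv:2109.12543 — 3 statements merged into one kernel-verified Lean document; each statement's English description precedes it below -/
import Mathlib

section
/- For every population state x = (x_1,…,x_N,x_c) with all components nonzero and every admissible resource-allocation vector r, the replicator-dynamics right-hand side is affine in x: for each index i ∈ {1,…,N,c} one has δ·x_i·(π_i(x,r) − π̄(x,r)) = a_i(r) − Θ(r)·x_i. -/
open scoped BigOperators

/-- For every population state `x = (x_1,…,x_N,x_c)` with all components
nonzero and every admissible resource-allocation vector `r`, the replicator-dynamics
right-hand side is affine in `x`: for each index `i ∈ {1,…,N,c}` one has
`δ·x_i·(π_i(x,r) − π̄(x,r)) = a_i(r) − Θ(r)·x_i`. -/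
theorem replicator_rhs_affine
    (N : ℕ) (hN : 1 ≤ N)
    (K Rc δ β pc : ℝ) (hK : 0 < K) (hRc : 0 < Rc) (hδ : 0 < δ) (hβ : 0 < β) (hpc : 0 < pc)
    (R p : Fin N → ℝ) (hR : ∀ n, 0 < R n) (hp : ∀ n, 0 < p n)
    -- admissible resource-allocation vector
    (r : Fin N → ℝ) (hr : ∀ n, 0 ≤ r n) (hrsum : ∑ m, r m ≤ 1)
    -- population state with all components nonzero
    (x : Fin N → ℝ) (xc : ℝ) (hx : ∀ n, x n ≠ 0) (hxc : xc ≠ 0)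
    -- the coefficients a_n(r), a_c(r) and Θ(r)
    (a : Fin N → ℝ) (ha : ∀ n, a n = (δ * β / K) * ((R n + Rc * r n) / p n))
    (ac : ℝ) (hac : ac = (δ * β / K) * (Rc * (1 - ∑ m, r m) / pc))
    (Θ : ℝ) (hΘ : Θ = ∑ n, a n + ac)
    -- user utilities and population-average utility
    (π : Fin N → ℝ) (hπ : ∀ n, π n = β * (R n + Rc * r n) / (K * p n * x n))
    (πc : ℝ) (hπc : πc = β * Rc * (1 - ∑ m, r m) / (K * pc * xc))
    (πbar : ℝ) (hπbar : πbar = ∑ n, x n * π n + xc * πc) :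
    (∀ n, δ * x n * (π n - πbar) = a n - Θ * x n) ∧
      δ * xc * (πc - πbar) = ac - Θ * xc := by
  have hxa : ∀ n, δ * (x n * π n) = a n := by
    intro n
    have hxn := hx n
    rw [hπ, ha]
    field_simp
  have hxac : δ * (xc * πc) = ac := by
    rw [hπc, hac]
    field_simp
  have hbar : δ * πbar = Θ := by
    rw [hπbar, hΘ, mul_add, Finset.mul_sum]
    simp only [hxa, hxac]
  constructor
  · intro n
    linear_combination hxa n - x n * hbar
  · linear_combination hxac - xc * hbar
end

section
/- (Global asymptotic stability of the replicator dynamics.) Fix a constant admissible resource-allocation vector r and set x*_i = a_i(r)/Θ(r). If x : [0,∞) → ℝ^{N+1} is differentiable and satisfies x_i'(t) = a_i(r) − Θ(r)·x_i(t) for all t ≥ 0 and all i, then for every component i, |x_i(t) − x*_i| = e^{−Θ(r)·t}·|x_i(0) − x*_i| for all t ≥ 0, and x(t) → x* as t → ∞; thus the dynamics is globally asymptotically stable with unique attractor x* regardless of the initial condition. -/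
open scoped BigOperators

/-- Global asymptotic stability of the replicator dynamics:
Fix a constant admissible resource-allocation vector `r` and set `x*_i = a_i(r)/Θ(r)`.
If `x : [0,∞) → ℝ^{N+1}` is differentiable and satisfies
`x_i'(t) = a_i(r) − Θ(r)·x_i(t)` for all `t ≥ 0` and all `i`, then for every component
`i`, `|x_i(t) − x*_i| = e^{−Θ(r)·t}·|x_i(0) − x*_i|` for all `t ≥ 0`, and
`x(t) → x*` as `t → ∞`. -/
theorem replicator_globally_asymptotically_stable
    (N : ℕ) (hN : 1 ≤ N)
    (K Rc δ β pc : ℝ) (hK : 0 < K) (hRc : 0 < Rc) (hδ : 0 < δ) (hβ : 0 < β) (hpc : 0 < pc)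
    (R p : Fin N → ℝ) (hR : ∀ n, 0 < R n) (hp : ∀ n, 0 < p n)
    -- constant admissible resource-allocation vector
    (r : Fin N → ℝ) (hr : ∀ n, 0 ≤ r n) (hrsum : ∑ m, r m ≤ 1)
    -- the coefficients a_i(r) and Θ(r)
    (a : Fin N ⊕ Unit → ℝ)
    (ha : ∀ n : Fin N, a (Sum.inl n) = (δ * β / K) * ((R n + Rc * r n) / p n))
    (hac : a (Sum.inr ()) = (δ * β / K) * (Rc * (1 - ∑ m, r m) / pc))
    (Θ : ℝ) (hΘ : Θ = ∑ n : Fin N, a (Sum.inl n) + a (Sum.inr ()))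
    -- the rest point x*
    (xstar : Fin N ⊕ Unit → ℝ) (hxstar : ∀ i, xstar i = a i / Θ)
    -- a solution of the replicator dynamics on [0,∞)
    (x : ℝ → Fin N ⊕ Unit → ℝ)
    (hx : ∀ t ∈ Set.Ici (0 : ℝ), ∀ i,
      HasDerivWithinAt (fun s => x s i) (a i - Θ * x t i) (Set.Ici 0) t) :
    (∀ t ∈ Set.Ici (0 : ℝ), ∀ i,
        |x t i - xstar i| = Real.exp (-Θ * t) * |x 0 i - xstar i|) ∧
      Filter.Tendsto x Filter.atTop (nhds xstar) := by
  have hΘpos : 0 < Θ := by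
    have h1 : ∀ n : Fin N, 0 < a (Sum.inl n) := fun n => by
      rw [ha n]
      apply mul_pos (by positivity)
      apply div_pos _ (hp n)
      have := mul_nonneg hRc.le (hr n)
      linarith [hR n]
    have h2 : 0 ≤ a (Sum.inr ()) := by
      rw [hac]
      apply mul_nonneg (by positivity)
      apply div_nonneg _ hpc.le
      apply mul_nonneg hRc.le
      linarith
    have hne : Nonempty (Fin N) := ⟨⟨0, by omega⟩⟩
    have hsum : 0 < ∑ n : Fin N, a (Sum.inl n) :=
      Finset.sum_pos (fun n _ => h1 n) Finset.univ_nonempty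
    linarith [hΘ.ge, hΘ.le]
  have hΘne : Θ ≠ 0 := ne_of_gt hΘpos
  have hΘx : ∀ i, Θ * xstar i = a i := fun i => by
    rw [hxstar i]; field_simp
  have key : ∀ t ∈ Set.Ici (0:ℝ), ∀ i,
      x t i - xstar i = Real.exp (-Θ*t) * (x 0 i - xstar i) := by
    intro t ht i
    set c := xstar i with hc
    have hg : ∀ s ∈ Set.Ici (0:ℝ),
        HasDerivWithinAt (fun u => Real.exp (Θ*u) * (x u i - c)) 0 (Set.Ici 0) s := by
      intro s hs
      have h1 : HasDerivAt (fun u => Real.exp (Θ*u)) (Real.exp (Θ*s) * (Θ * 1)) s :=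
        (Real.hasDerivAt_exp (Θ*s)).comp s ((hasDerivAt_id s).const_mul Θ)
      have h2 : HasDerivWithinAt (fun u => x u i - c) (a i - Θ * x s i) (Set.Ici 0) s :=
        (hx s hs i).sub_const c
      have h3 := (h1.hasDerivWithinAt).mul h2
      have heq : Real.exp (Θ*s) * (Θ*1) * (x s i - c) + Real.exp (Θ*s) * (a i - Θ * x s i) = 0 := by
        have := hΘx i
        rw [← hc] at this
        rw [← this]; ring
      rwa [heq] at h3
    have hconst := constant_of_has_deriv_right_zero
      (f := fun u => Real.exp (Θ*u) * (x u i - c)) (a := 0) (b := t)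
      (fun s hs => ((hg s hs.1).continuousWithinAt).mono (fun u hu => hu.1))
      (fun s hs => (hg s hs.1).mono (Set.Ici_subset_Ici.mpr hs.1))
    have h0 := hconst t ⟨ht, le_rfl⟩
    simp only [mul_zero, Real.exp_zero, one_mul] at h0
    rw [neg_mul, Real.exp_neg, ← h0, inv_mul_cancel_left₀ (Real.exp_ne_zero _)]
  refine ⟨fun t ht i => by
    rw [key t ht i, abs_mul, abs_of_pos (Real.exp_pos _)], ?_⟩
  rw [tendsto_pi_nhds]
  intro i
  have hexp : Filter.Tendsto (fun t : ℝ => Real.exp (-Θ*t)) Filter.atTop (nhds 0) := by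
    have h1 : Filter.Tendsto (fun t : ℝ => Θ * t) Filter.atTop Filter.atTop :=
      Filter.Tendsto.const_mul_atTop hΘpos Filter.tendsto_id
    have heq : (fun t : ℝ => Real.exp (-Θ*t)) = (fun u => Real.exp (-u)) ∘ (fun t => Θ*t) := by
      funext t; simp [neg_mul]
    rw [heq]
    exact Real.tendsto_exp_neg_atTop_nhds_zero.comp h1
  have hlim : Filter.Tendsto (fun t => xstar i + Real.exp (-Θ*t) * (x 0 i - xstar i))
      Filter.atTop (nhds (xstar i)) := by
    have := (hexp.mul_const (x 0 i - xstar i)).const_add (xstar i)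
    simpa using this
  refine hlim.congr' ?_
  filter_upwards [Filter.eventually_ge_atTop (0:ℝ)] with t ht
  have := key t ht i
  linarith
end

section
/- (Stability of the delayed replicator dynamics under small delay.) Let Θ > 0 and τ ≥ 0 be real numbers with Θ·τ < π/2. Then every complex number γ satisfying the characteristic equation γ + Θ·e^{−γτ} = 0 has strictly negative real part. -/
/-- Stability of the delayed replicator dynamics under small delay:
Let `Θ > 0` and `τ ≥ 0` be real numbers with `Θ·τ < π/2`. Then every complex number
`γ` satisfying the characteristic equation `γ + Θ·e^{−γτ} = 0` has strictly negative
real part. -/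
theorem delayed_replicator_roots_stable
    (Θ τ : ℝ) (hΘ : 0 < Θ) (hτ : 0 ≤ τ) (hsmall : Θ * τ < Real.pi / 2)
    (γ : ℂ) (hγ : γ + (Θ : ℂ) * Complex.exp (-(γ * (τ : ℂ))) = 0) :
    γ.re < 0 := by
  by_contra h
  push_neg at h
  have hγ' : γ = -((Θ : ℂ) * Complex.exp (-(γ * (τ : ℂ)))) := by
    linear_combination hγ
  have hre' : (-(γ * (τ : ℂ))).re = -(γ.re * τ) := by simp
  have him' : (-(γ * (τ : ℂ))).im = -(γ.im * τ) := by simp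
  have habs : ‖γ‖ = Θ * Real.exp (-(γ.re * τ)) := by
    conv_lhs => rw [hγ']
    rw [norm_neg, norm_mul, Complex.norm_exp, hre',
      Complex.norm_real, Real.norm_eq_abs, abs_of_pos hΘ]
  have hexple : Real.exp (-(γ.re * τ)) ≤ 1 := by
    apply Real.exp_le_one_iff.mpr
    nlinarith
  have him : |γ.im| ≤ Θ := by
    calc |γ.im| ≤ ‖γ‖ := Complex.abs_im_le_norm γ
      _ = Θ * Real.exp (-(γ.re * τ)) := habs
      _ ≤ Θ * 1 := by nlinarith
      _ = Θ := mul_one Θ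
  have habsle : |γ.im * τ| < Real.pi / 2 := by
    rw [abs_mul, abs_of_nonneg hτ]
    calc |γ.im| * τ ≤ Θ * τ := by nlinarith
      _ < Real.pi / 2 := hsmall
  have hcos : 0 < Real.cos (γ.im * τ) := by
    apply Real.cos_pos_of_mem_Ioo
    constructor
    · linarith [neg_abs_le (γ.im * τ)]
    · linarith [le_abs_self (γ.im * τ)]
  have hre : γ.re = -(Θ * (Real.exp (-(γ.re * τ)) * Real.cos (γ.im * τ))) := by
    have := congrArg Complex.re hγ'
    rw [Complex.neg_re, Complex.mul_re, Complex.ofReal_re, Complex.ofReal_im,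
      Complex.exp_re, Complex.exp_im, hre', him'] at this
    rw [Real.cos_neg, Real.sin_neg] at this
    linarith
  have := Real.exp_pos (-(γ.re * τ))
  nlinarith [mul_pos hΘ (mul_pos this hcos)]
end
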